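/- arXiv:1908.01881 — 4 statements merged into one kernel-verified Lean document; each statement's English description precedes it below -/
import Mathlib

section
/- Let α > 0 and β be real numbers with α ≥ β ≥ -α - β, and set γ = -α - β. Then β ≤ α/4 if and only if αβγ ≥ -(5√2/(21√21)) · (α² + β² + γ²)^{3/2}. -/
/-!
If `β ≤ 0` then `γ = -α - β ≤ 0` as well, so `αβγ ≥ 0` and both sides hold. If `β > 0` then
`αβγ < 0`, and after squaring the inequality reads `9261 (αβγ)² ≤ 50 (α² + β² + γ²)³`.
The difference of the two sides factors as `(α - 4β)(4α - β) Q(α, β)` with `Q` a quartic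
having positive coefficients, so its sign is that of `α - 4β`.
-/

open Real

lemma rpow_natCast_div_two_sq {x : ℝ} (hx : 0 ≤ x) (n : ℕ) : (x ^ ((n : ℝ) / 2)) ^ 2 = x ^ n := by
  rw [← rpow_natCast, ← rpow_mul hx, ← rpow_natCast]
  norm_num

lemma five_sqrt_two_div_sq : (5 * √2 / (21 * √21)) ^ 2 = 50 / 9261 := by
  rw [div_pow, mul_pow, mul_pow, sq_sqrt (by norm_num), sq_sqrt (by norm_num)]
  norm_num

lemma neg_le_iff_sq_le_sq {a d : ℝ} (hd : d ≤ 0) (ha : 0 ≤ a) : -a ≤ d ↔ d ^ 2 ≤ a ^ 2 := by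
  rw [sq_le_sq, abs_of_nonpos hd, abs_of_nonneg ha, neg_le]

lemma trace_free_norm_cube_sub_det_sq {α β γ : ℝ} (hγ : γ = -α - β) :
    50 * (α ^ 2 + β ^ 2 + γ ^ 2) ^ 3 - 9261 * (α * β * γ) ^ 2 =
      (α - 4 * β) * ((4 * α - β) * (100 * α ^ 4 + 725 * α ^ 3 * β + 1266 * α ^ 2 * β ^ 2 +
        725 * α * β ^ 3 + 100 * β ^ 4)) := by
  subst hγ
  ring

lemma det_sq_le_iff {α β γ : ℝ} (hβ : 0 < β) (hβα : β ≤ α) (hγ : γ = -α - β) :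
    9261 * (α * β * γ) ^ 2 ≤ 50 * (α ^ 2 + β ^ 2 + γ ^ 2) ^ 3 ↔ β ≤ α / 4 := by
  have hα : 0 < α := hβ.trans_le hβα
  have hQ : 0 < (4 * α - β) * (100 * α ^ 4 + 725 * α ^ 3 * β + 1266 * α ^ 2 * β ^ 2 +
      725 * α * β ^ 3 + 100 * β ^ 4) := mul_pos (by linarith) (by positivity)
  rw [← sub_nonneg, trace_free_norm_cube_sub_det_sq hγ, mul_nonneg_iff_of_pos_right hQ]
  constructor <;> intro h <;> linarith

theorem stmt_8_general (α β γ : ℝ) (h1 : α ≥ β) (h2 : β ≥ -α - β)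
    (hγ : γ = -α - β) :
    β ≤ α / 4 ↔
      α * β * γ ≥ -((5 * Real.sqrt 2) / (21 * Real.sqrt 21)) *
        (α ^ 2 + β ^ 2 + γ ^ 2) ^ ((3 : ℝ) / 2) := by
  have hS : 0 ≤ α ^ 2 + β ^ 2 + γ ^ 2 := by positivity
  have hbound : 0 ≤ 5 * √2 / (21 * √21) * (α ^ 2 + β ^ 2 + γ ^ 2) ^ ((3 : ℝ) / 2) := by
    positivity
  rw [ge_iff_le, neg_mul]
  rcases le_or_gt β 0 with hβ | hβ
  · have hdet : 0 ≤ α * β * γ := by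
      rw [mul_assoc]
      exact mul_nonneg (by linarith) (mul_nonneg_of_nonpos_of_nonpos hβ (by linarith))
    exact iff_of_true (by linarith) (by linarith)
  · have hdet : α * β * γ < 0 :=
      mul_neg_of_pos_of_neg (mul_pos (by linarith) hβ) (by linarith)
    rw [neg_le_iff_sq_le_sq hdet.le hbound, mul_pow (5 * √2 / (21 * √21)), five_sqrt_two_div_sq,
      show ((3 : ℝ) / 2) = ((3 : ℕ) : ℝ) / 2 by norm_num, rpow_natCast_div_two_sq hS,
      ← det_sq_le_iff hβ h1 hγ]
    constructor <;> intro h <;> linarith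

theorem stmt_8 (α β γ : ℝ) (hα : α > 0) (h1 : α ≥ β) (h2 : β ≥ -α - β)
    (hγ : γ = -α - β) :
    β ≤ α / 4 ↔
      α * β * γ ≥ -((5 * Real.sqrt 2) / (21 * Real.sqrt 21)) *
        (α ^ 2 + β ^ 2 + γ ^ 2) ^ ((3 : ℝ) / 2) :=
  stmt_8_general α β γ h1 h2 hγ
end

section
/- For x ∈ [-1/2, 1], one has x ≤ 1/4 if and only if (x + x²)/(2^{3/2}(1 + x + x²)^{3/2}) ≤ 5√2/(21√21). -/
/-!
Put `s = x + x²` and `r = √(1 + s)`. Then `(x + x²) / (1 + x + x²) ^ (3/2) = (r² - 1) / r³`,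
which is strictly increasing for `0 < r ≤ √3`, i.e. for `-1 < s ≤ 2`; and `x ↦ x + x²` is strictly
increasing for `x ≥ -1/2`. The threshold is the value at `x = 1/4`, where `s = 5/16` and `r = √21 / 4`.
-/

open Set

lemma Real.rpow_three_halves {y : ℝ} (hy : 0 ≤ y) : y ^ ((3 : ℝ) / 2) = √y ^ 3 := by
  rw [Real.sqrt_eq_rpow, ← Real.rpow_natCast, ← Real.rpow_mul hy]
  norm_num

lemma strictMonoOn_sq_sub_one_div_pow_three :
    StrictMonoOn (fun r : ℝ => (r ^ 2 - 1) / r ^ 3) (Ioc 0 √3) := by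
  rintro r ⟨hr, -⟩ t ⟨ht, ht3⟩ hrt
  have ht_sq : t ^ 2 ≤ 3 := by
    calc t ^ 2 ≤ √3 ^ 2 := by gcongr
      _ = 3 := Real.sq_sqrt (by norm_num)
  rw [div_lt_div_iff₀ (by positivity) (by positivity)]
  -- `(t²-1) r³ - (r²-1) t³ = (t - r)(t² + t r + r² - r² t²)`, and `r² t² ≤ 3 r² < t² + t r + r²`
  nlinarith [mul_pos (sub_pos.2 hrt) (mul_pos hr hr), mul_pos (sub_pos.2 hrt) (mul_pos hr ht),
    mul_le_mul_of_nonneg_left ht_sq (sq_nonneg r), mul_pos (sub_pos.2 hrt) (sub_pos.2 hrt)]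

lemma strictMonoOn_div_one_add_rpow_three_halves :
    StrictMonoOn (fun s : ℝ => s / (1 + s) ^ ((3 : ℝ) / 2)) (Ioc (-1) 2) := by
  have h_sqrt : StrictMonoOn (fun s : ℝ => √(1 + s)) (Ioc (-1) 2) := fun s hs t ht hst =>
    Real.sqrt_lt_sqrt (by linarith [hs.1]) (by linarith)
  have h_maps : MapsTo (fun s : ℝ => √(1 + s)) (Ioc (-1) 2) (Ioc 0 √3) := fun s ⟨hs1, hs2⟩ =>
    ⟨Real.sqrt_pos.2 (by linarith), Real.sqrt_le_sqrt (by linarith)⟩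
  refine (strictMonoOn_sq_sub_one_div_pow_three.comp h_sqrt h_maps).congr fun s hs => ?_
  simp only [Function.comp_apply]
  rw [Real.sq_sqrt (by linarith [hs.1]), Real.rpow_three_halves (by linarith [hs.1])]
  ring

lemma strictMonoOn_add_sq : StrictMonoOn (fun x : ℝ => x + x ^ 2) (Ici (-(1 / 2))) := by
  intro x hx y hy hxy
  simp only [mem_Ici] at hx hy
  nlinarith

theorem stmt_9 (x : ℝ) (hx : x ∈ Set.Icc (-(1 / 2) : ℝ) 1) :
    x ≤ 1 / 4 ↔
      (x + x ^ 2) / ((2 : ℝ) ^ ((3 : ℝ) / 2) * (1 + x + x ^ 2) ^ ((3 : ℝ) / 2)) ≤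
        5 * Real.sqrt 2 / (21 * Real.sqrt 21) := by
  obtain ⟨hx1, hx2⟩ := hx
  set ψ : ℝ → ℝ := fun s => s / (1 + s) ^ ((3 : ℝ) / 2)
  have h_lhs : (x + x ^ 2) / ((2 : ℝ) ^ ((3 : ℝ) / 2) * (1 + x + x ^ 2) ^ ((3 : ℝ) / 2)) =
      ψ (x + x ^ 2) / 2 ^ ((3 : ℝ) / 2) := by
    rw [div_mul_eq_div_div_swap, add_assoc]
  have h_rhs : 5 * Real.sqrt 2 / (21 * Real.sqrt 21) = ψ (5 / 16) / 2 ^ ((3 : ℝ) / 2) := by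
    have h16 : √(1 + 5 / 16 : ℝ) = √21 / 4 := by
      rw [Real.sqrt_eq_iff_mul_self_eq (by norm_num) (by positivity)]
      ring_nf
      norm_num
    simp only [ψ]
    rw [Real.rpow_three_halves (by norm_num), Real.rpow_three_halves (by norm_num), h16]
    field_simp
    rw [show √2 ^ 4 = (√2 ^ 2) ^ 2 by ring, Real.sq_sqrt (by norm_num)]
    norm_num
  have hs : x + x ^ 2 ∈ Ioc (-1 : ℝ) 2 := ⟨by nlinarith, by nlinarith⟩
  rw [h_lhs, h_rhs, div_le_div_iff_of_pos_right (by positivity),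
    strictMonoOn_div_one_add_rpow_three_halves.le_iff_le hs (by norm_num),
    ← strictMonoOn_add_sq.le_iff_le (mem_Ici.2 hx1) (by norm_num : (1 / 4 : ℝ) ∈ Ici (-(1 / 2)))]
  norm_num
end

section
/- Let A be a self-adjoint (symmetric) endomorphism of a 3-dimensional real inner product space with trace zero and det A > 0. Let α be its largest eigenvalue and ω a unit eigenvector for α. Then for every vector φ orthogonal to ω, ⟨Aφ, φ⟩ ≤ 0. -/
/-!
In an orthonormal eigenbasis `eᵢ` of `A`, `⟪A φ, φ⟫ = ∑ μᵢ ⟪eᵢ, φ⟫²`. The eigenvalues sum to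
`tr A = 0` and multiply to `det A > 0`, so at most one of them is positive. If `μᵢ > 0`, then
`α ≥ μᵢ > 0` exceeds every other eigenvalue, so the `α`-eigenvector `ω` is a nonzero multiple of
`eᵢ` and `φ ⊥ ω` kills the only positive term.
-/

open scoped RealInnerProductSpace

open Module.End

namespace LinearMap.IsSymmetric

variable {V : Type*} [NormedAddCommGroup V] [InnerProductSpace ℝ V] [FiniteDimensional ℝ V]
  {A : V →ₗ[ℝ] V} (hA : A.IsSymmetric) {n : ℕ} (hn : Module.finrank ℝ V = n)

theorem inner_apply_self_eq_sum_eigenvalues_mul_sq (φ : V) :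
    ⟪A φ, φ⟫ = ∑ i, hA.eigenvalues hn i * ⟪hA.eigenvectorBasis hn i, φ⟫ ^ 2 := by
  rw [← (hA.eigenvectorBasis hn).sum_inner_mul_inner]
  refine Finset.sum_congr rfl fun i _ => ?_
  rw [hA, apply_eigenvectorBasis, real_inner_smul_right, real_inner_comm φ]
  simp only [RCLike.ofReal_real_eq_id, id_eq]
  ring

theorem inner_eigenvectorBasis_eq_zero {α : ℝ} {ω : V} (hω : A ω = α • ω) {i : Fin n}
    (hi : hA.eigenvalues hn i ≠ α) : ⟪hA.eigenvectorBasis hn i, ω⟫ = 0 :=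
  hA.orthogonalFamily_eigenspaces hi ⟨_, (hA.hasEigenvector_eigenvectorBasis hn i).1⟩
    ⟨ω, mem_eigenspace_iff.2 hω⟩

theorem eq_inner_smul_eigenvectorBasis {α : ℝ} {ω : V} (hω : A ω = α • ω) {i : Fin n}
    (hi : ∀ j ≠ i, hA.eigenvalues hn j ≠ α) :
    ω = ⟪hA.eigenvectorBasis hn i, ω⟫ • hA.eigenvectorBasis hn i := by
  conv_lhs => rw [← (hA.eigenvectorBasis hn).sum_repr' ω]
  refine Finset.sum_eq_single i (fun j _ hj => ?_) (by simp)
  rw [hA.inner_eigenvectorBasis_eq_zero hn hω (hi j hj), zero_smul]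

theorem inner_apply_self_nonpos_of_inner_eq_zero
    (hpos : ∀ i j, 0 < hA.eigenvalues hn i → 0 < hA.eigenvalues hn j → i = j)
    {α : ℝ} {ω : V} (hω : A ω = α • ω) (hω0 : ω ≠ 0)
    (hmax : ∀ μ, HasEigenvalue A μ → μ ≤ α) {φ : V} (hφ : ⟪φ, ω⟫ = 0) :
    ⟪A φ, φ⟫ ≤ 0 := by
  rw [hA.inner_apply_self_eq_sum_eigenvalues_mul_sq hn]
  refine Finset.sum_nonpos fun i _ => ?_
  rcases le_or_gt (hA.eigenvalues hn i) 0 with hi | hi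
  · exact mul_nonpos_of_nonpos_of_nonneg hi (sq_nonneg _)
  suffices ⟪hA.eigenvectorBasis hn i, φ⟫ = 0 by simp [this]
  have hα : 0 < α := hi.trans_le (hmax _ (hA.hasEigenvalue_eigenvalues hn i))
  have hωi := hA.eq_inner_smul_eigenvectorBasis hn hω (i := i) fun j hj hjα =>
    hj (hpos j i (hjα ▸ hα) hi)
  have hc : ⟪hA.eigenvectorBasis hn i, ω⟫ ≠ 0 := fun hc => hω0 (by rw [hωi, hc, zero_smul])
  rw [hωi, real_inner_smul_right, mul_eq_zero] at hφ
  rw [real_inner_comm]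
  exact hφ.resolve_left hc

end LinearMap.IsSymmetric

theorem eq_of_pos_of_pos_of_sum_eq_zero_of_prod_pos {μ : Fin 3 → ℝ} (hsum : ∑ i, μ i = 0)
    (hprod : 0 < ∏ i, μ i) {i j : Fin 3} (hi : 0 < μ i) (hj : 0 < μ j) : i = j := by
  rw [Fin.sum_univ_three] at hsum
  rw [Fin.prod_univ_three] at hprod
  fin_cases i <;> fin_cases j <;> simp only [Fin.zero_eta, Fin.mk_one, Fin.reduceFinMk] at hi hj ⊢
    <;> first | rfl | nlinarith [mul_pos hi hj]

theorem stmt_13 (V : Type*) [NormedAddCommGroup V] [InnerProductSpace ℝ V]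
    [FiniteDimensional ℝ V] (hdim : Module.finrank ℝ V = 3)
    (A : V →ₗ[ℝ] V) (hsym : A.IsSymmetric)
    (htr : LinearMap.trace ℝ V A = 0) (hdet : 0 < LinearMap.det A)
    (α : ℝ) (ω : V) (hω : ‖ω‖ = 1) (heig : A ω = α • ω)
    (hmax : ∀ μ : ℝ, Module.End.HasEigenvalue A μ → μ ≤ α) :
    ∀ φ : V, ⟪φ, ω⟫ = 0 → ⟪A φ, φ⟫ ≤ 0 := by
  intro φ hφ
  have hsum : ∑ i, hsym.eigenvalues hdim i = 0 := by
    simpa [htr] using (hsym.trace_eq_sum_eigenvalues hdim).symm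
  have hprod : 0 < ∏ i, hsym.eigenvalues hdim i := by
    simpa [hsym.det_eq_prod_eigenvalues hdim] using hdet
  have hω0 : ω ≠ 0 := norm_ne_zero_iff.1 (hω ▸ one_ne_zero)
  exact hsym.inner_apply_self_nonpos_of_inner_eq_zero hdim
    (fun _ _ => eq_of_pos_of_pos_of_sum_eq_zero_of_prod_pos hsum hprod) heig hω0 hmax hφ
end

section
/- For all x ∈ [-1/2, 1], -(5√2)/(21√21) ≤ -(x + x²)/(2^{3/2}(1 + x + x²)^{3/2}) holds if and only if x ≤ 1/4; moreover, the value of the function -(x + x²)/(2^{3/2}(1+x+x²)^{3/2}) at x = -1/2 equals √6/18. -/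
private lemma rpow32 (a : ℝ) (ha : 0 ≤ a) :
    a ^ ((3 : ℝ) / 2) = a * Real.sqrt a := by
  rcases eq_or_lt_of_le ha with h | h
  · rw [← h, Real.zero_rpow (by norm_num), Real.sqrt_zero, mul_zero]
  · rw [show ((3 : ℝ) / 2) = 1 + 1 / 2 by norm_num, Real.rpow_add h, Real.rpow_one, ← Real.sqrt_eq_rpow]

private lemma negQ_pos (x : ℝ) (h0 : 0 < x) (h1 : x ≤ 1) :
    0 < 1600 + 11200*x + 17356*x^2 + 6536*x^3 - 1300*x^4 - 400*x^5 := by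
  nlinarith [mul_nonneg (sq_nonneg x) (by nlinarith : (0:ℝ) ≤ 1 - x^2),
    mul_nonneg (mul_nonneg h0.le (sq_nonneg x)) (by nlinarith : (0:ℝ) ≤ 1 - x^2),
    sq_nonneg x, h0.le]

private lemma poly_le (x : ℝ) (h0 : 0 < x) (h1 : x ≤ 1/4) :
    9261*(x+x^2)^2 ≤ 400*(1+x+x^2)^3 := by
  have hQ := negQ_pos x h0 (by linarith)
  nlinarith [mul_nonneg (by linarith : (0:ℝ) ≤ 1/4 - x) hQ.le]

private lemma poly_lt (x : ℝ) (h0 : 1/4 < x) (h1 : x ≤ 1) :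
    400*(1+x+x^2)^3 < 9261*(x+x^2)^2 := by
  have hQ := negQ_pos x (by linarith) h1
  nlinarith [mul_pos (by linarith : (0:ℝ) < x - 1/4) hQ]

private lemma aux_back (x s w : ℝ) (hxl : -(1/2) ≤ x) (hx : x ≤ 1/4)
    (hs2 : s^2 = 1+x+x^2) (hsp : 0 < s) (hw2 : w^2 = 21) (hwp : 0 < w) :
    21*w*(x+x^2) ≤ 20*s^3 := by
  rcases le_or_gt x 0 with h | h
  · have h1 : x + x^2 ≤ 0 := by nlinarith
    have h2 : 21*w*(x+x^2) ≤ 0 := by nlinarith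
    nlinarith [pow_pos hsp 3]
  · have hP := poly_le x h hx
    have ha : 0 ≤ 21*w*(x+x^2) := by positivity
    have hb : 0 ≤ 20*s^3 := by positivity
    have e1 : (21*w*(x+x^2))^2 = 9261*(x+x^2)^2 := by
      linear_combination (441*(x+x^2)^2) * hw2
    have e2 : (20*s^3)^2 = 400*(1+x+x^2)^3 := by
      linear_combination (400*(s^4 + s^2*(1+x+x^2) + (1+x+x^2)^2)) * hs2
    nlinarith [hP, e1, e2, ha, hb]

private lemma aux_fwd (x s w : ℝ) (hx : 1/4 < x) (hx1 : x ≤ 1)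
    (hs2 : s^2 = 1+x+x^2) (hsp : 0 < s) (hw2 : w^2 = 21) (hwp : 0 < w) :
    20*s^3 < 21*w*(x+x^2) := by
  have hP := poly_lt x hx hx1
  have ha : 0 ≤ 21*w*(x+x^2) := by positivity
  have hb : 0 ≤ 20*s^3 := by positivity
  have e1 : (21*w*(x+x^2))^2 = 9261*(x+x^2)^2 := by
    linear_combination (441*(x+x^2)^2) * hw2
  have e2 : (20*s^3)^2 = 400*(1+x+x^2)^3 := by
    linear_combination (400*(s^4 + s^2*(1+x+x^2) + (1+x+x^2)^2)) * hs2
  nlinarith [hP, e1, e2, ha, hb]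

theorem stmt_17 :
    (∀ x ∈ Set.Icc (-(1 / 2) : ℝ) 1,
        (-((5 * Real.sqrt 2) / (21 * Real.sqrt 21)) ≤
            -(x + x ^ 2) / ((2 : ℝ) ^ ((3 : ℝ) / 2) * (1 + x + x ^ 2) ^ ((3 : ℝ) / 2)) ↔
          x ≤ 1 / 4)) ∧
      -((-(1 / 2 : ℝ)) + (-(1 / 2 : ℝ)) ^ 2) /
          ((2 : ℝ) ^ ((3 : ℝ) / 2) *
            (1 + (-(1 / 2 : ℝ)) + (-(1 / 2 : ℝ)) ^ 2) ^ ((3 : ℝ) / 2)) =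
        Real.sqrt 6 / 18 := by
  constructor
  · intro x hx
    obtain ⟨hxl, hxr⟩ := hx
    have ht : (0:ℝ) < 1 + x + x^2 := by nlinarith [sq_nonneg (x + 1/2)]
    set s := Real.sqrt (1 + x + x^2) with hsdef
    have hs2 : s^2 = 1+x+x^2 := Real.sq_sqrt ht.le
    have hsp : 0 < s := Real.sqrt_pos.mpr ht
    have hw2 : (Real.sqrt 21)^2 = 21 := Real.sq_sqrt (by norm_num)
    have hwp : 0 < Real.sqrt 21 := Real.sqrt_pos.mpr (by norm_num)
    have hr2 : (Real.sqrt 2)^2 = 2 := Real.sq_sqrt (by norm_num)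
    have hrp : 0 < Real.sqrt 2 := Real.sqrt_pos.mpr (by norm_num)
    have hpow2 : (2:ℝ) ^ ((3:ℝ)/2) = 2 * Real.sqrt 2 := rpow32 2 (by norm_num)
    have hpowt : (1+x+x^2:ℝ) ^ ((3:ℝ)/2) = s^3 := by
      rw [rpow32 _ ht.le, ← hsdef, ← hs2]; ring
    rw [hpow2, hpowt, ← neg_div,
      div_le_div_iff₀ (by positivity) (by positivity)]
    have e : -(5*Real.sqrt 2)*(2*Real.sqrt 2*s^3) = -20*s^3 := by
      linear_combination (-10*s^3) * hr2
    constructor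
    · intro h
      rw [e] at h
      by_contra hc
      push_neg at hc
      have key := aux_fwd x s (Real.sqrt 21) hc hxr hs2 hsp hw2 hwp
      linarith
    · intro h
      rw [e]
      have key := aux_back x s (Real.sqrt 21) hxl h hs2 hsp hw2 hwp
      linarith
  · have h2 : (2:ℝ) ^ ((3:ℝ)/2) = 2 * Real.sqrt 2 := rpow32 2 (by norm_num)
    have hv : (1 + (-(1/2:ℝ)) + (-(1/2:ℝ))^2) = 3/4 := by norm_num
    have h34 : ((3:ℝ)/4) ^ ((3:ℝ)/2) = (3/4) * Real.sqrt (3/4) :=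
      rpow32 (3/4) (by norm_num)
    have hm : Real.sqrt 2 * Real.sqrt (3/4) = Real.sqrt (3/2) := by
      rw [← Real.sqrt_mul (by norm_num : (0:ℝ) ≤ 2)]; norm_num
    have hA : Real.sqrt 6 * Real.sqrt (3/2) = 3 := by
      rw [← Real.sqrt_mul (by norm_num : (0:ℝ) ≤ 6),
        show (6:ℝ) * (3/2) = 3^2 by norm_num, Real.sqrt_sq (by norm_num : (0:ℝ) ≤ 3)]
    have hApos : 0 < Real.sqrt (3/2) := Real.sqrt_pos.mpr (by norm_num)
    rw [hv, h2, h34]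
    have hnum : -((-(1/2:ℝ)) + (-(1/2:ℝ))^2) = 1/4 := by norm_num
    rw [hnum]
    rw [show 2 * Real.sqrt 2 * (3/4 * Real.sqrt (3/4)) = (3/2) * (Real.sqrt 2 * Real.sqrt (3/4)) by ring, hm]
    rw [div_eq_div_iff (by positivity) (by norm_num : (18:ℝ) ≠ 0)]
    nlinarith [hA, hApos]
end
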